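/- Let f : R → S be a flat ring homomorphism between commutative Noetherian rings, and let M be a finitely generated R-module such that the localization M_𝔭 is zero for every prime ideal 𝔭 of R of height at most 1. Then for every prime ideal 𝔮 of S of height at most 1, the localization (S ⊗_R M)_𝔮 is zero. -/

import Mathlib

/-! By going down for the flat map `R → S`, a prime `q` of `S` contracts to a prime `p` of no
larger height. Since `M` is finite and `M_p = 0`, some `r ∈ Ann M` lies outside `p`; its image
lies outside `q` and kills `S ⊗ M`, so `(S ⊗ M)_q = 0`. -/

open TensorProduct

lemma PrimeSpectrum.height_comap_le_of_hasGoingDown {R S : Type*} [CommRing R] [CommRing S]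
    [Algebra R S] [Algebra.HasGoingDown R S] (q : PrimeSpectrum S) :
    Order.height (PrimeSpectrum.comap (algebraMap R S) q) ≤ Order.height q := by
  refine Order.height_le fun l hl ↦ ?_
  have : q.asIdeal.LiesOver l.last.asIdeal := ⟨by rw [hl]; rfl⟩
  obtain ⟨L, hlen, hlast, -⟩ := Ideal.exists_ltSeries_of_hasGoingDown l q.asIdeal
  exact hlen ▸ Order.length_le_height_last.trans_eq (congrArg Order.height hlast)

lemma Module.annihilator_le_annihilator_tensorProduct (R N M : Type*) [CommRing R]
    [AddCommGroup N] [Module R N] [AddCommGroup M] [Module R M] :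
    Module.annihilator R M ≤ Module.annihilator R (N ⊗[R] M) := by
  intro r hr
  rw [Module.mem_annihilator] at hr ⊢
  intro z
  induction z using TensorProduct.induction_on with
  | zero => rw [smul_zero]
  | tmul n m => rw [← tmul_smul, hr, tmul_zero]
  | add x y hx hy => rw [smul_add, hx, hy, add_zero]

lemma Module.comap_mem_support_of_mem_support_baseChange {R S : Type*} [CommRing R] [CommRing S]
    [Algebra R S] {M : Type*} [AddCommGroup M] [Module R M] [Module.Finite R M]
    {q : PrimeSpectrum S} (hq : q ∈ Module.support S (S ⊗[R] M)) :
    PrimeSpectrum.comap (algebraMap R S) q ∈ Module.support R M := by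
  rw [Module.mem_support_iff_of_finite]
  intro r hr
  by_contra hrq
  obtain ⟨z, hz⟩ := Module.mem_support_iff'.mp hq
  refine hz (algebraMap R S r) hrq ?_
  rw [algebraMap_smul]
  exact Module.mem_annihilator.mp (Module.annihilator_le_annihilator_tensorProduct R S M hr) z

theorem stmt_0_general {R S : Type*} [CommRing R] [CommRing S]
    [Algebra R S] [Module.Flat R S]
    (M : Type*) [AddCommGroup M] [Module R M] [Module.Finite R M]
    (hM : ∀ (p : Ideal R) [hp : p.IsPrime],
      Order.height (⟨p, hp⟩ : PrimeSpectrum R) ≤ 1 →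
      Subsingleton (LocalizedModule p.primeCompl M)) :
    ∀ (q : Ideal S) [hq : q.IsPrime],
      Order.height (⟨q, hq⟩ : PrimeSpectrum S) ≤ 1 →
      Subsingleton (LocalizedModule q.primeCompl (S ⊗[R] M)) := by
  intro q hq hq_height
  let Q : PrimeSpectrum S := ⟨q, hq⟩
  rw [← Module.notMem_support_iff (p := Q)]
  intro hQ
  have hP := Module.comap_mem_support_of_mem_support_baseChange hQ
  rw [Module.mem_support_iff, ← not_subsingleton_iff_nontrivial] at hP
  exact hP (hM _ ((PrimeSpectrum.height_comap_le_of_hasGoingDown Q).trans hq_height))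

/-- **Flat base change preserves pseudo-nullity.**
Let `f : R → S` (here `algebraMap R S`) be a flat ring homomorphism between commutative
Noetherian rings, and let `M` be a finitely generated `R`-module whose localization at
every prime ideal of `R` of height at most `1` vanishes.  Then for every prime ideal `q`
of `S` of height at most `1`, the localization of `S ⊗[R] M` at `q` vanishes.
(Heights are taken in the prime spectrum, i.e. suprema of lengths of chains of primes.) -/
theorem stmt_0 {R S : Type*} [CommRing R] [CommRing S]
    [IsNoetherianRing R] [IsNoetherianRing S]
    [Algebra R S] [Module.Flat R S]
    (M : Type*) [AddCommGroup M] [Module R M] [Module.Finite R M]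
    (hM : ∀ (p : Ideal R) [hp : p.IsPrime],
      Order.height (⟨p, hp⟩ : PrimeSpectrum R) ≤ 1 →
      Subsingleton (LocalizedModule p.primeCompl M)) :
    ∀ (q : Ideal S) [hq : q.IsPrime],
      Order.height (⟨q, hq⟩ : PrimeSpectrum S) ≤ 1 →
      Subsingleton (LocalizedModule q.primeCompl (S ⊗[R] M)) :=
  stmt_0_general M hM
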